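/- Let Z be a random variable with E[Z | S = s] = 0 and Var(Z | S = s) = 1 for all s, and define for ε ∈ [0,1] the predictor f_ε = σ_ε^(S) Z + μ_ε^(S), where μ_ε^(s) = (1 - √ε) μ̄ + √ε μ^(s) and σ_ε^(s) = (1 - √ε) σ̄ + √ε σ^(s), with μ̄ = ∑_s p_s μ^(s), σ̄ = ∑_s p_s σ^(s). Then the total unfairness satisfies U(f_ε) = Var_S(E[f_ε|S]) + Var_S(√Var(f_ε|S)) = ε · (Var_S(μ^(S)) + Var_S(σ^(S))). -/
import Mathlib


open scoped BigOperators
open Finset MeasureTheory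

noncomputable def expS {S : Type*} [Fintype S] (p : S → ℝ) (g : S → ℝ) : ℝ :=
  ∑ s, p s * g s

noncomputable def varS {S : Type*} [Fintype S] (p : S → ℝ) (g : S → ℝ) : ℝ :=
  ∑ s, p s * (g s - expS p g) ^ 2

noncomputable def covS {S : Type*} [Fintype S] (p : S → ℝ) (g h : S → ℝ) : ℝ :=
  ∑ s, p s * (g s - expS p g) * (h s - expS p h)

lemma varS_affine {S : Type*} [Fintype S] (p : S → ℝ) (hp1 : ∑ s, p s = 1)
    (g : S → ℝ) (a c : ℝ) :
    varS p (fun s => c + a * g s) = a ^ 2 * varS p g := by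
  have hE : expS p (fun s => c + a * g s) = c + a * expS p g := by
    have : ∀ s, p s * (c + a * g s) = c * p s + a * (p s * g s) := fun s => by ring
    simp only [expS, this, Finset.sum_add_distrib, ← Finset.mul_sum, hp1]
    ring
  simp only [varS, hE, Finset.mul_sum]
  apply Finset.sum_congr rfl
  intro s _
  ring

theorem unfairness_eps_predictor {S : Type*} [Fintype S]
    (p : S → ℝ) (mug sigg : S → ℝ) (eps : ℝ)
    (hp : ∀ s, 0 < p s) (hp1 : ∑ s, p s = 1)
    (hsig : ∀ s, 0 ≤ sigg s) (heps : eps ∈ Set.Icc (0:ℝ) 1)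
    (nu : S → Measure ℝ) [∀ s, IsProbabilityMeasure (nu s)]
    (hZ1 : ∀ s, Integrable (fun z : ℝ => z) (nu s))
    (hZ2 : ∀ s, Integrable (fun z : ℝ => z ^ 2) (nu s))
    (hZmean : ∀ s, ∫ z, z ∂nu s = 0)
    (hZvar : ∀ s, ∫ z, z ^ 2 ∂nu s = 1) :
    let mubar := ∑ s, p s * mug s
    let sigbar := ∑ s, p s * sigg s
    let mue : S → ℝ := fun s => (1 - Real.sqrt eps) * mubar + Real.sqrt eps * mug s
    let sige : S → ℝ := fun s => (1 - Real.sqrt eps) * sigbar + Real.sqrt eps * sigg s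
    let feps : ℝ → S → ℝ := fun z s => sige s * z + mue s
    varS p (fun s => ∫ z, feps z s ∂nu s)
      + varS p (fun s =>
          Real.sqrt (∫ z, (feps z s - ∫ w, feps w s ∂nu s) ^ 2 ∂nu s))
      = eps * (varS p mug + varS p sigg) := by
  intro mubar sigbar mue sige feps
  obtain ⟨he0, he1⟩ := heps
  have hse : Real.sqrt eps ∈ Set.Icc (0:ℝ) 1 :=
    ⟨Real.sqrt_nonneg _, by rw [show (1:ℝ) = Real.sqrt 1 by simp]; exact Real.sqrt_le_sqrt he1⟩
  have hsq : Real.sqrt eps ^ 2 = eps := Real.sq_sqrt he0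
  -- mean integral
  have hmean : ∀ s, ∫ z, feps z s ∂nu s = mue s := by
    intro s
    have : ∫ z, feps z s ∂nu s = sige s * (∫ z, z ∂nu s) + mue s := by
      rw [integral_add ((hZ1 s).const_mul _) (integrable_const _),
        integral_const_mul, integral_const]
      simp
    rw [this, hZmean]; ring
  -- variance integral
  have hsigbar : 0 ≤ sigbar := Finset.sum_nonneg fun s _ => mul_nonneg (hp s).le (hsig s)
  have hsige : ∀ s, 0 ≤ sige s := fun s =>
    add_nonneg (mul_nonneg (by linarith [hse.2]) hsigbar)
      (mul_nonneg hse.1 (hsig s))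
  have hvar : ∀ s, Real.sqrt (∫ z, (feps z s - ∫ w, feps w s ∂nu s) ^ 2 ∂nu s) = sige s := by
    intro s
    have : (fun z => (feps z s - ∫ w, feps w s ∂nu s) ^ 2)
        = fun z => sige s ^ 2 * z ^ 2 := by
      ext z; rw [hmean s]; simp only [feps]; ring
    rw [this, integral_const_mul, hZvar, mul_one, Real.sqrt_sq (hsige s)]
  have h1 : varS p (fun s => ∫ z, feps z s ∂nu s) = eps * varS p mug := by
    have : (fun s => ∫ z, feps z s ∂nu s)
        = fun s => (1 - Real.sqrt eps) * mubar + Real.sqrt eps * mug s := by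
      ext s; rw [hmean s]
    rw [this, varS_affine p hp1, hsq]
  have h2 : varS p (fun s =>
      Real.sqrt (∫ z, (feps z s - ∫ w, feps w s ∂nu s) ^ 2 ∂nu s)) = eps * varS p sigg := by
    have : (fun s => Real.sqrt (∫ z, (feps z s - ∫ w, feps w s ∂nu s) ^ 2 ∂nu s))
        = fun s => (1 - Real.sqrt eps) * sigbar + Real.sqrt eps * sigg s := by
      ext s; rw [hvar s]
    rw [this, varS_affine p hp1, hsq]
  rw [h1, h2]; ring
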